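/- arXiv:2505.16236 — 2 statements merged into one kernel-verified Lean document; each statement's English description precedes it below -/
import Mathlib

section
/- Let a, a_i ∈ ℝ³ and b, b_i > 0. Define M(a,b | a_i,b_i) = b_i^{-1}(a a_iᵀ + a_i aᵀ) − b b_i^{-2} a_i a_iᵀ. Then (1/b)·a aᵀ ⪰ M(a,b | a_i,b_i), with M(a_i,b_i | a_i,b_i) = (1/b_i)·a_i a_iᵀ. -/
/-! The gap between the outer product `(1/b) a aᵀ` and its surrogate is a perfect square,
`(1/b) (a - (b/bᵢ) aᵢ)(a - (b/bᵢ) aᵢ)ᵀ`, hence positive semidefinite as soon as `b > 0`. -/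

open Matrix

section Surrogate

variable {n K : Type*} [Field K]

/-- The surrogate `M(a, b | aᵢ, bᵢ)` of the inner-approximation algorithm. -/
def surrogate (a : n → K) (b : K) (ai : n → K) (bi : K) : Matrix n n K :=
  bi⁻¹ • (vecMulVec a ai + vecMulVec ai a) - (b / bi ^ 2) • vecMulVec ai ai

theorem surrogate_self (ai : n → K) (bi : K) :
    surrogate ai bi ai bi = (1 / bi) • vecMulVec ai ai := by
  rw [surrogate, sq, div_self_mul_self', one_div]
  module

theorem inv_smul_vecMulVec_sub_surrogate (a ai : n → K) {b : K} (hb : b ≠ 0) (bi : K) :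
    b⁻¹ • vecMulVec a a - surrogate a b ai bi =
      b⁻¹ • vecMulVec (a - (b / bi) • ai) (a - (b / bi) • ai) := by
  simp only [surrogate, vecMulVec_sub, sub_vecMulVec, vecMulVec_smul, smul_vecMulVec]
  match_scalars <;> field_simp

end Surrogate

theorem posSemidef_inv_smul_vecMulVec_sub_surrogate {n : Type*} [Fintype n]
    (a ai : n → ℝ) {b : ℝ} (hb : 0 < b) (bi : ℝ) :
    (b⁻¹ • vecMulVec a a - surrogate a b ai bi).PosSemidef := by
  rw [inv_smul_vecMulVec_sub_surrogate a ai hb.ne']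
  exact (posSemidef_vecMulVec_self_star _).smul (inv_nonneg.mpr hb.le)

theorem stmt_9_general (a ai : Fin 3 → ℝ) (b bi : ℝ) (hb : 0 < b) :
    ((1 / b) • vecMulVec a a -
        (bi⁻¹ • (vecMulVec a ai + vecMulVec ai a) - (b / bi ^ 2) • vecMulVec ai ai)).PosSemidef ∧
    bi⁻¹ • (vecMulVec ai ai + vecMulVec ai ai) - (bi / bi ^ 2) • vecMulVec ai ai
      = (1 / bi) • vecMulVec ai ai := by
  rw [one_div]
  exact ⟨posSemidef_inv_smul_vecMulVec_sub_surrogate a ai hb bi, surrogate_self ai bi⟩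

theorem stmt_9 (a ai : Fin 3 → ℝ) (b bi : ℝ) (hb : 0 < b) (hbi : 0 < bi) :
    ((1 / b) • vecMulVec a a -
        (bi⁻¹ • (vecMulVec a ai + vecMulVec ai a) - (b / bi ^ 2) • vecMulVec ai ai)).PosSemidef ∧
    bi⁻¹ • (vecMulVec ai ai + vecMulVec ai ai) - (bi / bi ^ 2) • vecMulVec ai ai
      = (1 / bi) • vecMulVec ai ai :=
  stmt_9_general a ai b bi hb
end

section
/- Let A be a 2×2 symmetric block matrix [[Λ₁, Λ₂],[Λ₂ᵀ, Λ₃]] of real matrices with A ⪰ 0, and let B, T be symmetric positive definite with [[B, I],[I, T]] ⪰ 0, Λ₃ = I, and A·[[B, I],[I, T]] = 0. Then Λ₁ = (B^{-1})², Λ₂ = −B^{-1}, and T = B^{-1}. -/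
/-!
With `Λ₃ = 1`, the `(2,2)` block of the product gives `Λ₂ᵀ = -T`, so the `(2,1)` block reads
`T B = 1` and `T = B⁻¹`; symmetry of `T` turns this into `Λ₂ = -T`,
and then the `(1,1)` block `Λ₁ B = T` gives `Λ₁ = T²`.
-/

open Matrix

section

variable {R : Type*} [CommRing R] {m : Type*} [Fintype m] [DecidableEq m]

theorem fromBlocks_mul_fromBlocks_eq_zero {L1 L2 B T : Matrix m m R}
    (h : fromBlocks L1 L2 L2ᵀ 1 * fromBlocks B 1 1 T = 0) :
    L1 * B + L2 = 0 ∧ L2ᵀ * B + 1 = 0 ∧ L2ᵀ + T = 0 := by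
  rw [fromBlocks_multiply, ← fromBlocks_zero, fromBlocks_inj] at h
  obtain ⟨h11, -, h21, h22⟩ := h
  simp only [Matrix.mul_one, Matrix.one_mul] at h11 h21 h22
  exact ⟨h11, h21, h22⟩

theorem eq_of_fromBlocks_mul_fromBlocks_eq_zero {L1 L2 B T : Matrix m m R} (hT : Tᵀ = T)
    (h : fromBlocks L1 L2 L2ᵀ 1 * fromBlocks B 1 1 T = 0) :
    L1 = T * T ∧ L2 = -T ∧ B⁻¹ = T := by
  obtain ⟨h11, h21, h22⟩ := fromBlocks_mul_fromBlocks_eq_zero h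
  have hL2T : L2ᵀ = -T := eq_neg_of_add_eq_zero_left h22
  have hTB : T * B = 1 := by
    rw [hL2T, Matrix.neg_mul] at h21
    exact neg_add_eq_zero.mp h21
  have hL2 : L2 = -T := by rw [← transpose_transpose L2, hL2T, transpose_neg, hT]
  have hL1B : L1 * B = T := by rw [hL2] at h11; exact add_neg_eq_zero.mp h11
  refine ⟨?_, hL2, inv_eq_left_inv hTB⟩
  calc L1 = L1 * (B * T) := by rw [mul_eq_one_comm.mp hTB, Matrix.mul_one]
    _ = T * T := by rw [← Matrix.mul_assoc, hL1B]

end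

theorem stmt_10_general (n : ℕ) (L1 L2 L3 B T : Matrix (Fin n) (Fin n) ℝ)
    (hT : T.PosDef)
    (hL3 : L3 = 1)
    (hcs : Matrix.fromBlocks L1 L2 L2ᵀ L3 * Matrix.fromBlocks B 1 1 T = 0) :
    L1 = (B⁻¹) ^ 2 ∧ L2 = -B⁻¹ ∧ T = B⁻¹ := by
  subst hL3
  have hTsymm : Tᵀ = T := hT.isHermitian
  obtain ⟨hL1, hL2, hBinv⟩ := eq_of_fromBlocks_mul_fromBlocks_eq_zero hTsymm hcs
  rw [hBinv, sq]
  exact ⟨hL1, hL2, rfl⟩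

theorem stmt_10 (n : ℕ) (L1 L2 L3 B T : Matrix (Fin n) (Fin n) ℝ)
    (hL : (Matrix.fromBlocks L1 L2 L2ᵀ L3).PosSemidef)
    (hB : B.PosDef) (hT : T.PosDef)
    (hBT : (Matrix.fromBlocks B 1 1 T).PosSemidef)
    (hL3 : L3 = 1)
    (hcs : Matrix.fromBlocks L1 L2 L2ᵀ L3 * Matrix.fromBlocks B 1 1 T = 0) :
    L1 = (B⁻¹) ^ 2 ∧ L2 = -B⁻¹ ∧ T = B⁻¹ :=
  stmt_10_general n L1 L2 L3 B T hT hL3 hcs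
end
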